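/- arXiv:1003.5675 — 4 statements merged into one kernel-verified Lean document; each statement's English description precedes it below -/
import Mathlib

section
/- Let K be a field with more than 2 elements or let n > 1. Then no proper affine subspace of Matₙ(K) contains GLₙ(K); equivalently, the affine span of GLₙ(K) is all of Matₙ(K). -/
/-!
The direction space of the affine span of `GLₙ(K)` contains `U - 1` for every unit `U`, so it
suffices to produce every matrix unit `E i j` this way. Off the diagonal, `E i j` is a
transvection minus `1`. On the diagonal, `1 + a E i i` is invertible for `a ∉ {0, -1}`, which
exists when `|K| > 2`; when `n > 1`, `(1 + c E i j)(1 + E j i) - 1 = c E i i + c E i j + E j i`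
reduces `c E i i` to off-diagonal units.
-/

theorem Cardinal.exists_ne_ne_of_two_lt_mk {α : Type*} (hα : 2 < Cardinal.mk α) (a b : α) :
    ∃ c : α, c ≠ a ∧ c ≠ b := by
  by_contra! hab
  have hsub : Set.univ ⊆ ({a, b} : Set α) := fun c _ => by
    by_cases hc : c = a
    · exact Or.inl hc
    · exact Or.inr (hab c hc)
  refine hα.not_ge ?_
  calc Cardinal.mk α = Cardinal.mk (Set.univ : Set α) := Cardinal.mk_univ.symm
    _ ≤ Cardinal.mk ({a, b} : Set α) := Cardinal.mk_le_mk_of_subset hsub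
    _ ≤ Cardinal.mk ({b} : Set α) + 1 := Cardinal.mk_insert_le
    _ = 2 := by rw [Cardinal.mk_singleton]; norm_num

theorem sub_one_mem_vectorSpan_setOf_isUnit {R A : Type*} [Ring R] [Ring A] [Module R A]
    {a : A} (ha : IsUnit a) : a - 1 ∈ vectorSpan R {x : A | IsUnit x} :=
  vsub_mem_vectorSpan R (s := {x : A | IsUnit x}) ha isUnit_one

namespace Matrix

variable {ι : Type*} [Fintype ι] [DecidableEq ι]

section CommRing

variable {R : Type*} [CommRing R]

theorem single_mem_vectorSpan_setOf_isUnit_of_ne {i j : ι} (hij : i ≠ j) (c : R) :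
    single i j c ∈ vectorSpan R {M : Matrix ι ι R | IsUnit M} := by
  have hunit : IsUnit (transvection i j c) := by
    rw [isUnit_iff_isUnit_det, det_transvection_of_ne i j hij c]
    exact isUnit_one
  simpa [transvection] using sub_one_mem_vectorSpan_setOf_isUnit (R := R) hunit

theorem single_self_mem_vectorSpan_setOf_isUnit_of_ne {i j : ι} (hij : i ≠ j) (c : R) :
    single i i c ∈ vectorSpan R {M : Matrix ι ι R | IsUnit M} := by
  have hunit : IsUnit (transvection i j c * transvection j i 1) := by
    rw [isUnit_iff_isUnit_det, det_mul, det_transvection_of_ne i j hij c,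
      det_transvection_of_ne j i hij.symm 1, one_mul]
    exact isUnit_one
  have hdecomp : single i i c =
      (transvection i j c * transvection j i 1 - 1) - single i j c - single j i 1 := by
    simp only [transvection, add_mul, mul_add, one_mul, mul_one, single_mul_single_same]
    abel
  rw [hdecomp]
  exact sub_mem (sub_mem (sub_one_mem_vectorSpan_setOf_isUnit hunit)
    (single_mem_vectorSpan_setOf_isUnit_of_ne hij c))
    (single_mem_vectorSpan_setOf_isUnit_of_ne hij.symm 1)

end CommRing

section Field

variable {K : Type*} [Field K]

theorem single_self_mem_vectorSpan_setOf_isUnit_of_ne_neg_one {a : K} (ha : a ≠ -1) (i : ι) :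
    single i i a ∈ vectorSpan K {M : Matrix ι ι K | IsUnit M} := by
  have hunit : IsUnit (diagonal (1 + Pi.single i a : ι → K)) := by
    refine isUnit_diagonal.mpr (Pi.isUnit_iff.mpr fun k => ?_)
    rcases eq_or_ne k i with rfl | hk
    · simpa [add_eq_zero_iff_eq_neg'] using ha
    · simp [hk]
  simpa [← diagonal_one, diagonal_add, diagonal_single] using
    sub_one_mem_vectorSpan_setOf_isUnit (R := K) hunit

theorem single_self_mem_vectorSpan_setOf_isUnit_of_two_lt_mk (hK : 2 < Cardinal.mk K)
    (i : ι) (c : K) : single i i c ∈ vectorSpan K {M : Matrix ι ι K | IsUnit M} := by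
  obtain ⟨a, ha₀, ha₁⟩ := Cardinal.exists_ne_ne_of_two_lt_mk hK 0 (-1)
  have := Submodule.smul_mem _ (c / a)
    (single_self_mem_vectorSpan_setOf_isUnit_of_ne_neg_one ha₁ i)
  rwa [smul_single, smul_eq_mul, div_mul_cancel₀ c ha₀] at this

theorem affineSpan_setOf_isUnit_eq_top (h : 2 < Cardinal.mk K ∨ Nontrivial ι) :
    affineSpan K {M : Matrix ι ι K | IsUnit M} = ⊤ := by
  rw [AffineSubspace.affineSpan_eq_top_iff_vectorSpan_eq_top_of_nonempty K _ _ ⟨1, isUnit_one⟩,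
    eq_top_iff]
  rintro M -
  rw [matrix_eq_sum_single M]
  refine sum_mem fun i _ => sum_mem fun j _ => ?_
  obtain rfl | hij := eq_or_ne i j
  · obtain hK | hι := h
    · exact single_self_mem_vectorSpan_setOf_isUnit_of_two_lt_mk hK i (M i i)
    · obtain ⟨k, hki⟩ := exists_ne i
      exact single_self_mem_vectorSpan_setOf_isUnit_of_ne hki.symm (M i i)
  · exact single_mem_vectorSpan_setOf_isUnit_of_ne hij (M i j)

end Field

end Matrix

/-- No proper affine subspace of `Matₙ(K)` contains `GLₙ(K)` when `|K| > 2` or `n > 1`: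
the affine span of the set of invertible matrices is everything. -/
theorem stmt_1 (n : ℕ) (K : Type*) [Field K]
    (h : 2 < Cardinal.mk K ∨ 1 < n) :
    affineSpan K {M : Matrix (Fin n) (Fin n) K | IsUnit M} = ⊤ :=
  Matrix.affineSpan_setOf_isUnit_eq_top (h.imp_right Fin.nontrivial_iff_two_le.mpr)
end

section
/- Let K be a field, n ≥ 2, and let A, B ∈ Matₙ(K) both have rank 1. If A + B also has rank 1, then ker A = ker B or im A = im B. -/
open FiniteDimensional Submodule

private lemma range_eq_span {n : ℕ} {K : Type*} [Field K]
    (M : Matrix (Fin n) (Fin n) K) (hM : M.rank = 1) {x : Fin n → K}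
    (hx : M.mulVecLin x ≠ 0) :
    LinearMap.range M.mulVecLin = Submodule.span K {M.mulVecLin x} := by
  refine (eq_of_le_of_finrank_eq (Submodule.span_le.2 ?_) ?_).symm
  · rintro y rfl; exact ⟨x, rfl⟩
  · rw [finrank_span_singleton hx]
    exact hM.symm

private lemma ker_finrank {n : ℕ} {K : Type*} [Field K]
    (M : Matrix (Fin n) (Fin n) K) (hM : M.rank = 1) :
    Module.finrank K (LinearMap.ker M.mulVecLin) = n - 1 := by
  have h := LinearMap.finrank_range_add_finrank_ker M.mulVecLin
  have hr : Module.finrank K (LinearMap.range M.mulVecLin) = 1 := hM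
  rw [hr, Module.finrank_pi, Fintype.card_fin] at h
  omega

/-- If `A`, `B` and `A + B` all have rank 1, then `ker A = ker B` or `im A = im B`. -/
theorem stmt_3 (n : ℕ) (hn : 2 ≤ n) (K : Type*) [Field K]
    (A B : Matrix (Fin n) (Fin n) K)
    (hA : A.rank = 1) (hB : B.rank = 1) (hAB : (A + B).rank = 1) :
    LinearMap.ker A.mulVecLin = LinearMap.ker B.mulVecLin ∨
    LinearMap.range A.mulVecLin = LinearMap.range B.mulVecLin := by
  by_cases h : LinearMap.ker A.mulVecLin = LinearMap.ker B.mulVecLin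
  · exact Or.inl h
  right
  -- neither kernel contains the other
  have hdim : Module.finrank K (LinearMap.ker A.mulVecLin)
      = Module.finrank K (LinearMap.ker B.mulVecLin) := by
    rw [ker_finrank A hA, ker_finrank B hB]
  have hAB' : (A + B).mulVecLin = A.mulVecLin + B.mulVecLin := by
    simp [Matrix.mulVecLin_add]
  obtain ⟨x, hxB, hxA⟩ : ∃ x, x ∈ LinearMap.ker B.mulVecLin ∧
      x ∉ LinearMap.ker A.mulVecLin := by
    by_contra hc
    push_neg at hc
    exact h (eq_of_le_of_finrank_eq hc hdim.symm).symm
  obtain ⟨y, hyA, hyB⟩ : ∃ y, y ∈ LinearMap.ker A.mulVecLin ∧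
      y ∉ LinearMap.ker B.mulVecLin := by
    by_contra hc
    push_neg at hc
    exact h (eq_of_le_of_finrank_eq hc hdim)
  rw [LinearMap.mem_ker] at hxB hyA
  have hxA' : A.mulVecLin x ≠ 0 := hxA
  have hyB' : B.mulVecLin y ≠ 0 := hyB
  have hx : (A + B).mulVecLin x = A.mulVecLin x := by
    rw [hAB']; simp [hxB]
  have hy : (A + B).mulVecLin y = B.mulVecLin y := by
    rw [hAB']; simp [hyA]
  have h1 : LinearMap.range A.mulVecLin = LinearMap.range (A + B).mulVecLin := by
    rw [range_eq_span A hA hxA', range_eq_span (A + B) hAB (x := x) (by rw [hx]; exact hxA'), hx]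
  have h2 : LinearMap.range B.mulVecLin = LinearMap.range (A + B).mulVecLin := by
    rw [range_eq_span B hB hyB', range_eq_span (A + B) hAB (x := y) (by rw [hy]; exact hyB'), hy]
  rw [h1, h2]
end

section
/- Every bijective affine map u : Mat₂(𝔽₂) → Mat₂(𝔽₂) that preserves the determinant (det(u(M)) = det(M) for all M) has linear part belonging to the symplectic group of the form B(X,Y) = det(X+Y) − det X − det Y. -/
/-! `det` on 2×2 matrices is a quadratic map and `B` is its polar form. For a quadratic map `Q`,
the second difference `Q (a + b + c) - Q (a + c) - Q (b + c) + Q c` equals `B(a, b)` whatever `c`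
is; taking `c = u 0`, an affine `u = ℓ + c` preserving `Q` carries the second difference of `Q`
at `(X, Y, 0)` to that at `(ℓ X, ℓ Y, c)`, so `B(ℓ X, ℓ Y) = B(X, Y)`. -/

namespace QuadraticMap

variable {R M M' N : Type*} [CommRing R] [AddCommGroup M] [Module R M]
  [AddCommGroup M'] [Module R M'] [AddCommGroup N] [Module R N]

theorem polar_eq_second_difference (Q : QuadraticMap R M N) (a b c : M) :
    polar Q a b = Q (a + b + c) - Q (a + c) - Q (b + c) + Q c := by
  have h := polar_add_left (Q := Q) a c b
  simp only [polar] at h ⊢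
  rw [show a + c + b = a + b + c by abel, add_comm c b] at h
  linear_combination (norm := abel) -h

theorem polar_linear_eq_of_comp_affineMap {Q : QuadraticMap R M N} {Q' : QuadraticMap R M' N}
    (u : M →ᵃ[R] M') (hu : ∀ x, Q' (u x) = Q x) (x y : M) :
    polar Q' (u.linear x) (u.linear y) = polar Q x y := by
  have hcomp : ∀ z, u z = u.linear z + u 0 := fun z => congrFun u.decomp z
  rw [polar_eq_second_difference Q' _ _ (u 0), ← map_add, ← hcomp, ← hcomp, ← hcomp,
    hu, hu, hu, hu, map_zero, add_zero]
  rfl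

end QuadraticMap

namespace Matrix

variable (R : Type*) [CommRing R]

def detFinTwoQuadraticMap : QuadraticMap R (Matrix (Fin 2) (Fin 2) R) R :=
  QuadraticMap.linMulLin (entryLinearMap R R 0 0) (entryLinearMap R R 1 1) -
    QuadraticMap.linMulLin (entryLinearMap R R 0 1) (entryLinearMap R R 1 0)

theorem detFinTwoQuadraticMap_apply (A : Matrix (Fin 2) (Fin 2) R) :
    detFinTwoQuadraticMap R A = A.det := by
  simp [detFinTwoQuadraticMap, QuadraticMap.linMulLin_apply, det_fin_two]

end Matrix

/-- Every determinant-preserving affine automorphism of `Mat₂(𝔽₂)` has its linear part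
in the symplectic group of `B(X,Y) = det(X+Y) - det X - det Y`. -/
theorem stmt_11
    (u : Matrix (Fin 2) (Fin 2) (ZMod 2) ≃ᵃ[ZMod 2] Matrix (Fin 2) (Fin 2) (ZMod 2))
    (hu : ∀ M, (u M).det = M.det) :
    ∀ X Y : Matrix (Fin 2) (Fin 2) (ZMod 2),
      (u.linear X + u.linear Y).det - (u.linear X).det - (u.linear Y).det
        = (X + Y).det - X.det - Y.det := by
  intro X Y
  let Q := Matrix.detFinTwoQuadraticMap (ZMod 2)
  have hQ : ∀ M, Q (u M) = Q M := fun M => by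
    rw [Matrix.detFinTwoQuadraticMap_apply, Matrix.detFinTwoQuadraticMap_apply]
    exact hu M
  have h := QuadraticMap.polar_linear_eq_of_comp_affineMap u.toAffineMap hQ X Y
  simp only [QuadraticMap.polar, Q, Matrix.detFinTwoQuadraticMap_apply] at h
  exact h
end

section
/- The map from the group of affine automorphisms of Mat₂(𝔽₂) stabilizing GL₂(𝔽₂) to the symplectic group Sp(B) (where B(X,Y) = det(X+Y) − det X − det Y) given by taking the linear part is an injective group homomorphism; since both groups have order 720, it is an isomorphism. -/
/-!
Let `Q = det`, a quadratic form on `Mat₂(𝔽₂)` whose polar form `B` is nondegenerate. Over `𝔽₂`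
an affine bijection `u = g + t` stabilizes `GL₂ = {Q = 1}` iff `Q ∘ u = Q`. Expanding
`Q (g x + t) = Q x` shows that `Q ∘ g - Q = -Q t - B (g ·, t)` is affine, so `g` preserves `B`;
and two such maps with the same linear part differ by a translation `c` with `Q (· + c) = Q`,
which puts `c` in the radical of `B`. Conversely, for `g ∈ Sp(B)` the defect `Q ∘ g - Q` is
additive, hence equals `B (c, ·)` for some `c`, and then `x ↦ g x + g c` turns `Q` into `Q + Q c`.
As `Q` vanishes on 10 matrices and equals `1` on 6, no bijection can add `1` to it, so `Q c = 0`.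
-/

open QuadraticMap Finset

section AffineIsometry

variable {R V N : Type*} [CommRing R] [AddCommGroup V] [Module R V] [AddCommGroup N] [Module R N]

theorem AffineEquiv.apply_eq_linear_add (u : V ≃ᵃ[R] V) (x : V) : u x = u.linear x + u 0 := by
  simpa using u.map_vadd 0 x

variable {Q : QuadraticMap R V N}

theorem QuadraticMap.polar_linear_of_forall_map_eq {u : V ≃ᵃ[R] V} (hu : ∀ x, Q (u x) = Q x)
    (x y : V) : polar Q (u.linear x) (u.linear y) = polar Q x y := by
  have ht : Q (u 0) = 0 := by simpa using hu 0
  have hlin (z : V) : Q (u.linear z) = Q z - Q (u 0) - polar Q (u.linear z) (u 0) := by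
    rw [← hu z, u.apply_eq_linear_add, polar]
    abel
  rw [polar, ← map_add, hlin, hlin, hlin, map_add u.linear, polar_add_left, ht]
  conv_rhs => rw [polar]
  abel

theorem QuadraticMap.eq_zero_of_forall_map_add_eq (hQ : (polarBilin Q).SeparatingLeft) {c : V}
    (hc : ∀ x, Q (x + c) = Q x) : c = 0 := by
  have hc0 : Q c = 0 := by simpa using hc 0
  refine hQ c fun y => ?_
  rw [polarBilin_apply_apply, polar, add_comm, hc, hc0]
  abel

theorem QuadraticMap.affineEquiv_ext_of_linear_eq (hQ : (polarBilin Q).SeparatingLeft)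
    {u v : V ≃ᵃ[R] V} (hu : ∀ x, Q (u x) = Q x) (hv : ∀ x, Q (v x) = Q x)
    (h : u.linear = v.linear) : u = v := by
  have hv_add (x : V) : u x = v x + (u 0 - v 0) := by
    rw [u.apply_eq_linear_add, v.apply_eq_linear_add, h]
    abel
  have h0 : u 0 - v 0 = 0 := eq_zero_of_forall_map_add_eq hQ fun y => by
    obtain ⟨x, rfl⟩ := v.surjective y
    rw [← hv_add, hu, hv]
  exact AffineEquiv.ext fun x => by rw [hv_add, h0, add_zero]

end AffineIsometry

section ZModTwo

theorem ZMod.eq_iff_eq_one_iff_eq_one {a b : ZMod 2} : (a = 1 ↔ b = 1) ↔ a = b := by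
  revert a b; decide

theorem Equiv.image_setOf_eq_one_eq_iff {α : Type*} (f : α → ZMod 2) (e : α ≃ α) :
    e '' {x | f x = 1} = {x | f x = 1} ↔ ∀ x, f (e x) = f x := by
  rw [← Equiv.eq_preimage_iff_image_eq, Set.ext_iff]
  exact forall_congr' fun x => ZMod.eq_iff_eq_one_iff_eq_one.trans eq_comm

theorem ZMod.eq_zero_of_forall_apply_equiv_eq_add {α : Type*} [Fintype α] {f : α → ZMod 2}
    (hf : #{x | f x = 0} ≠ #{x | f x = 1}) (e : α ≃ α) {a : ZMod 2}
    (he : ∀ x, f (e x) = f x + a) : a = 0 := by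
  by_contra ha
  obtain rfl : a = 1 := (by decide : ∀ b : ZMod 2, b ≠ 0 → b = 1) a ha
  refine hf (card_equiv e fun x => ?_)
  simp only [mem_filter, mem_univ, true_and, he]
  generalize f x = b
  revert b; decide

variable {V : Type*} [AddCommGroup V] [Module (ZMod 2) V]
  {Q : QuadraticForm (ZMod 2) V} {g : V ≃ₗ[ZMod 2] V}

theorem QuadraticMap.map_add_eq_add_of_polar_eq_map_sub
    (hg : ∀ x y, polar Q (g x) (g y) = polar Q x y) {c : V}
    (hc : ∀ x, polar Q c x = Q (g x) - Q x) (x : V) : Q (g x + g c) = Q x + Q c := by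
  have hsplit : Q (g x + g c) = Q (g x) + Q (g c) + polar Q c x := by
    rw [← polar_comm, ← hg, polar]
    abel
  have hself : polar Q c c = 2 * Q c := by rw [polar_self, nsmul_eq_mul, Nat.cast_ofNat]
  have h2 : (2 : ZMod 2) = 0 := rfl
  linear_combination hsplit - hc x - hc c + hself + (polar Q c x + Q c) * h2

variable [Fintype V]

theorem QuadraticMap.exists_polar_eq_map_sub (hQ : (polarBilin Q).SeparatingLeft)
    (hg : ∀ x y, polar Q (g x) (g y) = polar Q x y) :
    ∃ c, ∀ x, polar Q c x = Q (g x) - Q x := by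
  let defect : V →+ ZMod 2 :=
    { toFun := fun x => Q (g x) - Q x
      map_zero' := by simp
      map_add' := fun x y => by
        have := hg x y
        simp only [polar, map_add] at this ⊢
        linear_combination this }
  have hnd := LinearMap.BilinForm.Nondegenerate.ofSeparatingLeft hQ
  exact ⟨(LinearMap.BilinForm.toDual (polarBilin Q) hnd).symm (defect.toZModLinearMap 2),
    LinearMap.BilinForm.apply_toDual_symm_apply (hB := hnd) _⟩

theorem QuadraticMap.exists_affineEquiv_linear_eq
    (hQ : (polarBilin Q).SeparatingLeft) (hcard : #{x | Q x = 0} ≠ #{x | Q x = 1})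
    (hg : ∀ x y, polar Q (g x) (g y) = polar Q x y) :
    ∃ u : V ≃ᵃ[ZMod 2] V, (∀ x, Q (u x) = Q x) ∧ u.linear = g := by
  obtain ⟨c, hc⟩ := exists_polar_eq_map_sub hQ hg
  let u : V ≃ᵃ[ZMod 2] V := AffineEquiv.mk' (fun x => g x + g c) g 0 fun x => by simp
  have hu (x : V) : Q (u x) = Q x + Q c := map_add_eq_add_of_polar_eq_map_sub hg hc x
  have hc0 : Q c = 0 := ZMod.eq_zero_of_forall_apply_equiv_eq_add hcard u.toEquiv hu
  exact ⟨u, fun x => by rw [hu, hc0, add_zero], rfl⟩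

end ZModTwo

namespace Matrix

variable (R : Type*) [CommRing R]

def detQuadraticForm : QuadraticForm R (Matrix (Fin 2) (Fin 2) R) :=
  QuadraticMap.ofPolar det (fun a X => by simp [_root_.sq])
    (fun X X' Y => by simp only [polar, det_fin_two, add_apply]; ring)
    (fun a X Y => by simp only [polar, det_fin_two, add_apply, smul_apply, smul_eq_mul]; ring)

variable {R}

@[simp]
theorem coe_detQuadraticForm : ⇑(detQuadraticForm R) = det := rfl

theorem polar_det_fin_two (X Y : Matrix (Fin 2) (Fin 2) R) :
    polar det X Y = X 0 0 * Y 1 1 + X 1 1 * Y 0 0 - X 0 1 * Y 1 0 - X 1 0 * Y 0 1 := by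
  simp only [polar, det_fin_two, add_apply]
  ring

theorem separatingLeft_polarBilin_detQuadraticForm :
    (polarBilin (detQuadraticForm R)).SeparatingLeft := by
  intro X hX
  have h00 := hX !![0, 0; 0, 1]
  have h01 := hX !![0, 0; 1, 0]
  have h10 := hX !![0, 1; 0, 0]
  have h11 := hX !![1, 0; 0, 0]
  simp only [polarBilin_apply_apply, coe_detQuadraticForm, polar_det_fin_two, of_apply, cons_val',
    cons_val_one, cons_val_fin_one, mul_one, cons_val_zero, mul_zero, add_zero, sub_zero, zero_sub,
    neg_eq_zero, sub_self, zero_add] at h00 h01 h10 h11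
  ext i j
  fin_cases i <;> fin_cases j <;> simpa

theorem isUnit_iff_det_eq_one_zmod_two {n : Type*} [Fintype n] [DecidableEq n]
    (M : Matrix n n (ZMod 2)) : IsUnit M ↔ M.det = 1 := by
  rw [isUnit_iff_isUnit_det, isUnit_iff_ne_zero]
  generalize M.det = a
  revert a; decide

theorem card_det_eq_zero_ne_card_det_eq_one :
    #{X : Matrix (Fin 2) (Fin 2) (ZMod 2) | X.det = 0} ≠
      #{X : Matrix (Fin 2) (Fin 2) (ZMod 2) | X.det = 1} := by
  simp only [det_fin_two]
  decide

end Matrix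

/-- Taking the linear part gives a group isomorphism from the group `𝒜𝒢₂(𝔽₂)` of affine
automorphisms of `Mat₂(𝔽₂)` stabilizing `GL₂(𝔽₂)` onto the symplectic group of the form
`B(X,Y) = det(X+Y) - det X - det Y`: it is multiplicative, injective and surjective. -/
theorem stmt_13 :
    let Mat := Matrix (Fin 2) (Fin 2) (ZMod 2)
    let GLset : Set Mat := {M | IsUnit M}
    let B : Mat → Mat → ZMod 2 := fun X Y => (X + Y).det - X.det - Y.det
    -- multiplicativity: the linear part of a composite is the composite of linear parts
    (∀ u v : Mat ≃ᵃ[ZMod 2] Mat, u '' GLset = GLset → v '' GLset = GLset →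
      (u.trans v).linear = u.linear.trans v.linear) ∧
    -- injectivity
    (∀ u v : Mat ≃ᵃ[ZMod 2] Mat, u '' GLset = GLset → v '' GLset = GLset →
      u.linear = v.linear → u = v) ∧
    -- surjectivity onto Sp(B)
    (∀ g : Mat ≃ₗ[ZMod 2] Mat, (∀ X Y, B (g X) (g Y) = B X Y) →
      ∃ u : Mat ≃ᵃ[ZMod 2] Mat, u '' GLset = GLset ∧ u.linear = g) ∧
    -- the linear part of any element of 𝒜𝒢₂(𝔽₂) lies in Sp(B)
    (∀ u : Mat ≃ᵃ[ZMod 2] Mat, u '' GLset = GLset →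
      ∀ X Y, B (u.linear X) (u.linear Y) = B X Y) := by
  intro Mat GLset B
  let Q := Matrix.detQuadraticForm (ZMod 2)
  have hQ := Matrix.separatingLeft_polarBilin_detQuadraticForm (R := ZMod 2)
  have hGL (u : Mat ≃ᵃ[ZMod 2] Mat) : u '' GLset = GLset ↔ ∀ X, Q (u X) = Q X := by
    have hset : GLset = {X | Q X = 1} := Set.ext Matrix.isUnit_iff_det_eq_one_zmod_two
    rw [hset]
    exact u.toEquiv.image_setOf_eq_one_eq_iff Q
  refine ⟨fun _ _ _ _ => rfl,
    fun u v hu hv => affineEquiv_ext_of_linear_eq hQ ((hGL u).1 hu) ((hGL v).1 hv),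
    fun g hg => ?_, fun u hu => polar_linear_of_forall_map_eq ((hGL u).1 hu)⟩
  obtain ⟨u, hu, rfl⟩ :=
    exists_affineEquiv_linear_eq hQ Matrix.card_det_eq_zero_ne_card_det_eq_one hg
  exact ⟨u, (hGL u).2 hu, rfl⟩
end
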